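/- arXiv:2008.06745 — 3 statements merged into one kernel-verified Lean document; each statement's English description precedes it below -/
import Mathlib

section
/- Let P be a connected infinite Γ-colored d-complete poset such that for every color b, the set P_b is unbounded above in P and unbounded below in P. Then P is a full heap. -/
namespace GCP

/-- A Dynkin diagram on a finite set `Γ` of colors, encoded by the integers
`θ a b` of its generalized Cartan matrix. -/
structure DynkinDiagram (Γ : Type*) [Fintype Γ] where
  θ : Γ → Γ → ℤ
  diag : ∀ a, θ a a = 2
  offdiag_nonpos : ∀ a b, a ≠ b → θ a b ≤ 0
  zero_iff : ∀ a b, a ≠ b → (θ a b = 0 ↔ θ b a = 0)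

variable {Γ : Type*} [Fintype Γ] {P : Type*} [PartialOrder P] [LocallyFiniteOrder P]

/-- Distinct colors `a` and `b` are adjacent when `θ a b < 0`. -/
def DynkinDiagram.Adj (D : DynkinDiagram Γ) (a b : Γ) : Prop :=
  a ≠ b ∧ D.θ a b < 0

/-- Distinct colors `a` and `b` are distant when `θ a b = 0`. -/
def DynkinDiagram.Distant (D : DynkinDiagram Γ) (a b : Γ) : Prop :=
  a ≠ b ∧ D.θ a b = 0

theorem DynkinDiagram.Adj.symm {D : DynkinDiagram Γ} {a b : Γ} (h : D.Adj a b) :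
    D.Adj b a :=
  ⟨h.1.symm, lt_of_le_of_ne (D.offdiag_nonpos b a h.1.symm)
    (fun h0 => h.2.ne ((D.zero_iff a b h.1).mpr h0))⟩

/-- The simple graph underlying a Dynkin diagram, with an edge between each
pair of adjacent colors. -/
def DynkinDiagram.graph (D : DynkinDiagram Γ) : SimpleGraph Γ where
  Adj a b := D.Adj a b
  symm := ⟨fun _ _ h => h.symm⟩
  loopless := ⟨fun _ h => h.1 rfl⟩

/-- The Dynkin diagram is connected: any two colors are joined by a path of
adjacencies. -/
def DynkinDiagram.Connected (D : DynkinDiagram Γ) : Prop :=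
  ∀ a b : Γ, Relation.ReflTransGen D.Adj a b

/-- A poset is connected: any two elements are linked by a finite chain of
comparabilities (equivalently, the poset cannot be written as the disjoint
union of two nonempty subposets). -/
def PosetConnected (P : Type*) [PartialOrder P] : Prop :=
  ∀ x y : P, Relation.ReflTransGen (fun u v : P => u ≤ v ∨ v ≤ u) x y

/-- `x < y` are consecutive elements of the color `a`. -/
def Consecutive (κ : P → Γ) (a : Γ) (x y : P) : Prop :=
  x < y ∧ κ x = a ∧ κ y = a ∧ ∀ z ∈ Finset.Ioo x y, κ z ≠ a

/-- EC: elements with equal colors are comparable. -/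
def EC (κ : P → Γ) : Prop := ∀ x y : P, κ x = κ y → x ≤ y ∨ y ≤ x

/-- NA: neighbors (covering pairs) have adjacent colors. -/
def NA (D : DynkinDiagram Γ) (κ : P → Γ) : Prop :=
  ∀ x y : P, x ⋖ y → D.Adj (κ x) (κ y)

/-- AC: elements with adjacent colors are comparable. -/
def AC (D : DynkinDiagram Γ) (κ : P → Γ) : Prop :=
  ∀ x y : P, D.Adj (κ x) (κ y) → x ≤ y ∨ y ≤ x

/-- ICE2: the census of the open interval between consecutive elements of a
color is two. -/
def ICE2 (D : DynkinDiagram Γ) (κ : P → Γ) : Prop :=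
  ∀ (a : Γ) (x y : P), Consecutive κ a x y →
    ∑ z ∈ Finset.Ioo x y, (-D.θ (κ z) a) = 2

/-- `U(x,S)`: elements of `S` above `x` with color adjacent to that of `x`. -/
def USet (D : DynkinDiagram Γ) (κ : P → Γ) (S : Set P) (x : P) : Set P :=
  {y ∈ S | x < y ∧ D.Adj (κ y) (κ x)}

/-- `L(x,S)`: elements of `S` below `x` with color adjacent to that of `x`. -/
def LSet (D : DynkinDiagram Γ) (κ : P → Γ) (S : Set P) (x : P) : Set P :=
  {y ∈ S | y < x ∧ D.Adj (κ y) (κ x)}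

/-- UCBk: for every `x` maximal among elements of its color, `U(x,P)` is
finite with census at most `k`. -/
def UCB (D : DynkinDiagram Γ) (κ : P → Γ) (k : ℕ) : Prop :=
  ∀ x : P, (∀ y : P, κ y = κ x → ¬ x < y) →
    ∃ hfin : (USet D κ Set.univ x).Finite,
      ∑ y ∈ hfin.toFinset, (-D.θ (κ y) (κ x)) ≤ (k : ℤ)

/-- LCBk: for every `x` minimal among elements of its color, `L(x,P)` is
finite with census at most `k`. -/
def LCB (D : DynkinDiagram Γ) (κ : P → Γ) (k : ℕ) : Prop :=
  ∀ x : P, (∀ y : P, κ y = κ x → ¬ y < x) →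
    ∃ hfin : (LSet D κ Set.univ x).Finite,
      ∑ y ∈ hfin.toFinset, (-D.θ (κ y) (κ x)) ≤ (k : ℤ)

/-- The coloring properties of a Γ-colored d-complete poset (the coloring is
required to be surjective separately). -/
def DComplete (D : DynkinDiagram Γ) (κ : P → Γ) : Prop :=
  EC κ ∧ NA D κ ∧ AC D κ ∧ ICE2 D κ ∧ UCB D κ 1

/-- G1: each `P_a` and each `P_b ∪ P_c` for adjacent `b, c` is a chain. -/
def G1 (D : DynkinDiagram Γ) (κ : P → Γ) : Prop :=
  (∀ a : Γ, IsChain (· ≤ ·) {x : P | κ x = a}) ∧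
    ∀ b c : Γ, D.Adj b c → IsChain (· ≤ ·) {x : P | κ x = b ∨ κ x = c}

/-- G2: the order is the minimal partial order extending the given orders on
the chains `P_a` and `P_b ∪ P_c`; i.e. every relation `x ≤ y` lies in the
reflexive transitive closure of the relations between pairs of equal or
adjacent colors. -/
def G2 (D : DynkinDiagram Γ) (κ : P → Γ) : Prop :=
  ∀ x y : P, x ≤ y →
    Relation.ReflTransGen (fun u v : P => u ≤ v ∧ (κ u = κ v ∨ D.Adj (κ u) (κ v))) x y

/-- G3: every color set `P_a` is order-isomorphic to `ℤ`. -/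
def G3 (κ : P → Γ) : Prop := ∀ a : Γ, Nonempty ({x : P | κ x = a} ≃o ℤ)

/-- G4: for adjacent colors `a, b`, every element of color `a` has a neighbor
of color `b`. -/
def G4 (D : DynkinDiagram Γ) (κ : P → Γ) : Prop :=
  ∀ a b : Γ, D.Adj a b → ∀ x : P, κ x = a → ∃ y : P, κ y = b ∧ (x ⋖ y ∨ y ⋖ x)

/-- G5: the sum of `θ (κ z) a` over the closed interval between consecutive
elements of color `a` is two. -/
def G5 (D : DynkinDiagram Γ) (κ : P → Γ) : Prop :=
  ∀ (a : Γ) (x y : P), Consecutive κ a x y →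
    ∑ z ∈ Finset.Icc x y, D.θ (κ z) a = 2

/-- A full heap: a Γ-colored poset satisfying G1–G5. -/
def FullHeap (D : DynkinDiagram Γ) (κ : P → Γ) : Prop :=
  G1 D κ ∧ G2 D κ ∧ G3 κ ∧ G4 D κ ∧ G5 D κ

/-- S1: neighbors have equal or adjacent colors and incomparable elements
have distant colors. -/
def S1 (D : DynkinDiagram Γ) (κ : P → Γ) : Prop :=
  (∀ x y : P, x ⋖ y → κ x = κ y ∨ D.Adj (κ x) (κ y)) ∧
    ∀ x y : P, ¬ x ≤ y → ¬ y ≤ x → D.Distant (κ x) (κ y)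

/-- S2: the open interval between consecutive elements of color `a` contains
either exactly two elements of color adjacent to `a`, both `1`-adjacent to
`a`, or exactly one element, whose color is `2`-adjacent to `a`. -/
def S2 (D : DynkinDiagram Γ) (κ : P → Γ) : Prop :=
  ∀ (a : Γ) (x y : P), Consecutive κ a x y →
    (∃ u ∈ Finset.Ioo x y, ∃ v ∈ Finset.Ioo x y, u ≠ v ∧
        D.θ (κ u) a = -1 ∧ D.θ (κ v) a = -1 ∧
        ∀ z ∈ Finset.Ioo x y, D.Adj (κ z) a → z = u ∨ z = v) ∨
    (∃ w : P, Finset.Ioo x y = {w} ∧ D.θ (κ w) a = -2)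

/-- S3: an element maximal among elements of its color is covered by at most
one element; any such cover has color `1`-adjacent to it and is maximal among
elements of its own color. -/
def S3 (D : DynkinDiagram Γ) (κ : P → Γ) : Prop :=
  ∀ x : P, (∀ y : P, κ y = κ x → ¬ x < y) →
    (∀ y z : P, x ⋖ y → x ⋖ z → y = z) ∧
      ∀ y : P, x ⋖ y → D.θ (κ y) (κ x) = -1 ∧ ∀ z : P, κ z = κ y → ¬ y < z

/-- S4: the underlying simple graph of the Dynkin diagram is acyclic. -/
def S4 (D : DynkinDiagram Γ) : Prop := D.graph.IsAcyclic

/-- The coloring properties of a dominant minuscule heap (the poset is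
additionally required to be finite, and the coloring surjective). -/
def DominantMinusculeHeapProps (D : DynkinDiagram Γ) (κ : P → Γ) : Prop :=
  S1 D κ ∧ S2 D κ ∧ S3 D κ ∧ S4 D

/-- The color set `P_b` is bounded above in `P`. -/
def ColorBddAbove (κ : P → Γ) (b : Γ) : Prop := ∃ u : P, ∀ x : P, κ x = b → x ≤ u

/-- The color set `P_b` is bounded below in `P`. -/
def ColorBddBelow (κ : P → Γ) (b : Γ) : Prop := ∃ l : P, ∀ x : P, κ x = b → l ≤ x


end GCP

/-! Each `P_a` is a locally finite chain without least or greatest element, hence isomorphic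
to `ℤ`; G1, G2 and G5 restate EC with AC, NA (in a locally finite poset `≤` is generated by
covering relations) and ICE2. For G4, an element `x` of a color adjacent to `b` lies between
consecutive elements `z < y` of color `b`. If `x` neither covers `z` nor is covered by `y`, then
the cover of `z` below `x`, the element covered by `y` above `x`, and `x` itself are three elements
of `(z, y)` with colors adjacent to `b`, against the census `2` of ICE2. -/

section ChainInLocallyFiniteOrder

variable {P : Type*} [PartialOrder P] [LocallyFiniteOrder P]

theorem IsChain.exists_isLeast_inter_Ioi {S : Set P} (hS : IsChain (· ≤ ·) S) {x w : P}
    (hw : w ∈ S) (hxw : x < w) : ∃ m, IsLeast (S ∩ Set.Ioi x) m := by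
  obtain ⟨m, ⟨hmS, hxm, hmw⟩, hmin⟩ :=
    ((Set.finite_Ioc x w).inter_of_right S).exists_minimal ⟨w, hw, hxw, le_rfl⟩
  refine ⟨m, ⟨hmS, hxm⟩, fun s ⟨hsS, hxs⟩ => ?_⟩
  exact (hS.total hmS hsS).elim id fun hsm => hmin ⟨hsS, hxs, hsm.trans hmw⟩ hsm

theorem IsChain.exists_isGreatest_inter_Iio {S : Set P} (hS : IsChain (· ≤ ·) S) {x w : P}
    (hw : w ∈ S) (hwx : w < x) : ∃ m, IsGreatest (S ∩ Set.Iio x) m :=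
  IsChain.exists_isLeast_inter_Ioi (P := Pᵒᵈ) hS.symm hw hwx

theorem IsChain.nonempty_orderIso_int {S : Set P} (hS : IsChain (· ≤ ·) S) (hne : S.Nonempty)
    (hmax : ∀ x ∈ S, ∃ y ∈ S, x < y) (hmin : ∀ x ∈ S, ∃ y ∈ S, y < x) :
    Nonempty (S ≃o ℤ) := by
  classical
  let : LinearOrder S :=
    { (inferInstance : PartialOrder S) with
      le_total := fun u v => hS.total u.2 v.2
      toDecidableLE := Classical.decRel _ }
  have : Nonempty S := hne.to_subtype
  have : NoMaxOrder S := ⟨fun u => let ⟨y, hy, h⟩ := hmax u u.2; ⟨⟨y, hy⟩, h⟩⟩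
  have : NoMinOrder S := ⟨fun u => let ⟨y, hy, h⟩ := hmin u u.2; ⟨⟨y, hy⟩, h⟩⟩
  let := LinearLocallyFiniteOrder.succOrder S
  let := LinearLocallyFiniteOrder.predOrder S
  exact ⟨orderIsoIntOfLinearSuccPredArch⟩

end ChainInLocallyFiniteOrder

namespace GCP

section ColoredPoset

variable {Γ : Type*} {P : Type*} [PartialOrder P] {κ : P → Γ}

theorem EC.isChain (hEC : EC κ) (a : Γ) : IsChain (· ≤ ·) {x | κ x = a} :=
  fun x hx y hy _ => hEC x y (hx.trans hy.symm)

theorem exists_gt_of_not_colorBddAbove {b : Γ} (h : ¬ ColorBddAbove κ b) {x : P}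
    (hcomp : ∀ w, κ w = b → w ≤ x ∨ x ≤ w) : ∃ w, κ w = b ∧ x < w := by
  simp only [ColorBddAbove, not_exists, not_forall] at h
  obtain ⟨w, hw, hwx⟩ := h x
  exact ⟨w, hw, lt_of_le_not_ge ((hcomp w hw).resolve_left hwx) hwx⟩

theorem exists_lt_of_not_colorBddBelow {b : Γ} (h : ¬ ColorBddBelow κ b) {x : P}
    (hcomp : ∀ w, κ w = b → w ≤ x ∨ x ≤ w) : ∃ w, κ w = b ∧ w < x :=
  exists_gt_of_not_colorBddAbove (P := Pᵒᵈ) h fun w hw => (hcomp w hw).symm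

theorem g1_of_ec_of_ac [Fintype Γ] {D : DynkinDiagram Γ} (hEC : EC κ) (hAC : AC D κ) :
    G1 D κ := by
  refine ⟨hEC.isChain, fun b c hbc x hx y hy _ => ?_⟩
  rcases hx with hx | hx <;> rcases hy with hy | hy
  · exact hEC x y (hx.trans hy.symm)
  · exact hAC x y (hx ▸ hy ▸ hbc)
  · exact hAC x y (hx ▸ hy ▸ hbc.symm)
  · exact hEC x y (hx.trans hy.symm)

section LocallyFinite

variable [LocallyFiniteOrder P]

theorem consecutive_of_isGreatest_of_isLeast {b : Γ} {x y z : P} (hxb : κ x ≠ b)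
    (hcomp : ∀ w, κ w = b → w ≤ x ∨ x ≤ w) (hz : IsGreatest ({w | κ w = b} ∩ Set.Iio x) z)
    (hy : IsLeast ({w | κ w = b} ∩ Set.Ioi x) y) : Consecutive κ b z y := by
  refine ⟨hz.1.2.trans hy.1.2, hz.1.1, hy.1.1, fun w hw hwb => ?_⟩
  have hwx : w ≠ x := by rintro rfl; exact hxb hwb
  rw [Finset.mem_Ioo] at hw
  rcases hcomp w hwb with hle | hle
  · exact hw.1.not_ge (hz.2 ⟨hwb, hle.lt_of_ne hwx⟩)
  · exact hw.2.not_ge (hy.2 ⟨hwb, hle.lt_of_ne hwx.symm⟩)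

theorem g3_of_ec (hsurj : Function.Surjective κ) (hEC : EC κ)
    (hub : ∀ b : Γ, ¬ ColorBddAbove κ b) (hlb : ∀ b : Γ, ¬ ColorBddBelow κ b) : G3 κ := by
  intro a
  have hcomp : ∀ x, κ x = a → ∀ w, κ w = a → w ≤ x ∨ x ≤ w := fun x hx w hw =>
    hEC w x (hw.trans hx.symm)
  exact (hEC.isChain a).nonempty_orderIso_int (hsurj a)
    (fun x hx => exists_gt_of_not_colorBddAbove (hub a) (hcomp x hx))
    (fun x hx => exists_lt_of_not_colorBddBelow (hlb a) (hcomp x hx))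

variable [Fintype Γ] {D : DynkinDiagram Γ}

theorem card_le_census_of_adj {a : Γ} {x y : P} (hxy : Consecutive κ a x y) {s : Finset P}
    (hs : s ⊆ Finset.Ioo x y) (hadj : ∀ z ∈ s, D.Adj (κ z) a) :
    (s.card : ℤ) ≤ ∑ z ∈ Finset.Ioo x y, -D.θ (κ z) a := by
  have hnonneg : ∀ z ∈ Finset.Ioo x y, 0 ≤ -D.θ (κ z) a := fun z hz =>
    neg_nonneg.mpr (D.offdiag_nonpos _ _ (hxy.2.2.2 z hz))
  calc (s.card : ℤ) = ∑ z ∈ s, 1 := by simp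
    _ ≤ ∑ z ∈ s, -D.θ (κ z) a := Finset.sum_le_sum fun z hz => by linarith [(hadj z hz).2]
    _ ≤ ∑ z ∈ Finset.Ioo x y, -D.θ (κ z) a :=
      Finset.sum_le_sum_of_subset_of_nonneg hs fun z hz _ => hnonneg z hz

theorem g2_of_na (hNA : NA D κ) : G2 D κ := fun x y hxy =>
  Relation.ReflTransGen.mono (fun u v huv => ⟨huv.le, Or.inr (hNA u v huv)⟩) x y
    (le_iff_reflTransGen_covBy.mp hxy)

theorem g4_of_ice2 (hEC : EC κ) (hNA : NA D κ) (hAC : AC D κ) (hICE2 : ICE2 D κ)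
    (hub : ∀ b : Γ, ¬ ColorBddAbove κ b) (hlb : ∀ b : Γ, ¬ ColorBddBelow κ b) : G4 D κ := by
  classical
  intro a b hab x hxa
  have hcomp : ∀ w, κ w = b → w ≤ x ∨ x ≤ w := fun w hw =>
    hAC w x (hw ▸ hxa ▸ hab.symm)
  obtain ⟨w₁, hw₁, hxw₁⟩ := exists_gt_of_not_colorBddAbove (hub b) hcomp
  obtain ⟨w₂, hw₂, hw₂x⟩ := exists_lt_of_not_colorBddBelow (hlb b) hcomp
  obtain ⟨y, hy⟩ := (hEC.isChain b).exists_isLeast_inter_Ioi hw₁ hxw₁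
  obtain ⟨z, hz⟩ := (hEC.isChain b).exists_isGreatest_inter_Iio hw₂ hw₂x
  have hzy := consecutive_of_isGreatest_of_isLeast (hxa ▸ hab.1) hcomp hz hy
  obtain ⟨u, hzu, hux⟩ := exists_covBy_le_of_lt hz.1.2
  obtain ⟨v, hxv, hvy⟩ := exists_le_covBy_of_lt hy.1.2
  rcases hux.eq_or_lt with rfl | hux
  · exact ⟨z, hz.1.1, Or.inr hzu⟩
  rcases hxv.eq_or_lt with rfl | hxv
  · exact ⟨y, hy.1.1, Or.inl hvy⟩
  have hcensus := card_le_census_of_adj (D := D) hzy (s := {u, x, v})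
    (by
      intro t ht
      simp only [Finset.mem_insert, Finset.mem_singleton] at ht
      rcases ht with rfl | rfl | rfl <;> rw [Finset.mem_Ioo]
      · exact ⟨hzu.lt, hux.trans hy.1.2⟩
      · exact ⟨hz.1.2, hy.1.2⟩
      · exact ⟨hz.1.2.trans hxv, hvy.lt⟩)
    (by
      intro t ht
      simp only [Finset.mem_insert, Finset.mem_singleton] at ht
      rcases ht with rfl | rfl | rfl
      · exact hz.1.1 ▸ (hNA z t hzu).symm
      · exact hxa ▸ hab
      · exact hy.1.1 ▸ hNA t y hvy)
  rw [hICE2 b z y hzy, Finset.card_eq_three.mpr ⟨u, x, v, hux.ne, (hux.trans hxv).ne, hxv.ne, rfl⟩]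
    at hcensus
  norm_num at hcensus

theorem g5_of_ice2 (hICE2 : ICE2 D κ) : G5 D κ := by
  classical
  intro a x y hxy
  have hIoo : ∑ z ∈ Finset.Ioo x y, D.θ (κ z) a = -2 := by
    linarith [Finset.sum_neg_distrib (s := Finset.Ioo x y) (f := fun z => D.θ (κ z) a),
      hICE2 a x y hxy]
  rw [← Finset.Ico_insert_right hxy.1.le, Finset.sum_insert (by simp),
    ← Finset.Ioo_insert_left hxy.1, Finset.sum_insert (by simp), hxy.2.1, hxy.2.2.1, D.diag, hIoo]
  norm_num

end LocallyFinite

end ColoredPoset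

variable {Γ : Type*} [Fintype Γ] {P : Type*} [PartialOrder P] [LocallyFiniteOrder P]

theorem statement13_general (D : DynkinDiagram Γ) (κ : P → Γ)
    (hsurj : Function.Surjective κ) (hdc : DComplete D κ)
    (hub : ∀ b : Γ, ¬ ColorBddAbove κ b) (hlb : ∀ b : Γ, ¬ ColorBddBelow κ b) :
    FullHeap D κ := by
  obtain ⟨hEC, hNA, hAC, hICE2, -⟩ := hdc
  exact ⟨g1_of_ec_of_ac hEC hAC, g2_of_na hNA, g3_of_ec hsurj hEC hub hlb,
    g4_of_ice2 hEC hNA hAC hICE2 hub hlb, g5_of_ice2 hICE2⟩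

/-- a connected infinite Γ-colored d-complete poset whose color
sets are all unbounded above and unbounded below is a full heap. -/
theorem statement13 [Infinite P] (D : DynkinDiagram Γ) (κ : P → Γ)
    (hsurj : Function.Surjective κ) (hconn : PosetConnected P) (hdc : DComplete D κ)
    (hub : ∀ b : Γ, ¬ ColorBddAbove κ b) (hlb : ∀ b : Γ, ¬ ColorBddBelow κ b) :
    FullHeap D κ :=
  statement13_general D κ hsurj hdc hub hlb

end GCP
end

section
/- Let P be a Γ-colored poset that satisfies EC, NA, and AC. Then P is connected if and only if the Dynkin diagram Γ is connected. -/
namespace GCP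

variable {Γ : Type*} [Fintype Γ] {P : Type*} [PartialOrder P] [LocallyFiniteOrder P]

/-!
In a locally finite poset `x ≤ y` is a finite chain of covers, whose colors form a path in `Γ`
by NA; so comparability paths in `P` push forward to paths in `Γ`. Conversely, a path in `Γ`
lifts along a section of the surjective coloring to a comparability path by AC, and EC links
every element to the chosen representative of its color.
-/

instance DynkinDiagram.instSymmAdj (D : DynkinDiagram Γ) : Std.Symm D.Adj :=
  ⟨fun _ _ h => h.symm⟩

section

variable {D : DynkinDiagram Γ} {κ : P → Γ}

theorem NA.reflTransGen_adj_of_le (hNA : NA D κ) {u v : P} (h : u ≤ v) :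
    Relation.ReflTransGen D.Adj (κ u) (κ v) :=
  Relation.ReflTransGen.lift κ hNA u v (le_iff_reflTransGen_covBy.mp h)

theorem connected_of_posetConnected (hsurj : Function.Surjective κ)
    (hNA : NA D κ) (hP : PosetConnected P) : D.Connected := by
  intro a b
  obtain ⟨x, rfl⟩ := hsurj a
  obtain ⟨y, rfl⟩ := hsurj b
  refine Relation.ReflTransGen.lift' κ (fun u v huv => ?_) x y (hP x y)
  rcases huv with huv | hvu
  · exact hNA.reflTransGen_adj_of_le huv
  · exact symm (hNA.reflTransGen_adj_of_le hvu)

omit [LocallyFiniteOrder P] in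
theorem posetConnected_of_connected (hsurj : Function.Surjective κ) (hEC : EC κ)
    (hAC : AC D κ) (hD : D.Connected) : PosetConnected P := by
  intro x y
  let s := Function.surjInv hsurj
  have hs : ∀ a, κ (s a) = a := Function.surjInv_eq hsurj
  have hlift : Relation.ReflTransGen (fun u v : P => u ≤ v ∨ v ≤ u) (s (κ x)) (s (κ y)) :=
    Relation.ReflTransGen.lift s (fun a b hab => hAC _ _ (by rwa [hs, hs])) _ _ (hD _ _)
  exact .head (hEC x _ (hs _).symm) (hlift.tail (hEC _ y (hs _)))

end

/-- a Γ-colored poset satisfying EC, NA, and AC is connected iff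
its Dynkin diagram is connected. -/
theorem statement17 (D : DynkinDiagram Γ) (κ : P → Γ) (hsurj : Function.Surjective κ)
    (hEC : EC κ) (hNA : NA D κ) (hAC : AC D κ) :
    PosetConnected P ↔ D.Connected :=
  ⟨connected_of_posetConnected hsurj hNA,
    posetConnected_of_connected hsurj hEC hAC⟩

end GCP
end

section
/- Let Γ be a Dynkin diagram with generalized Cartan matrix θ and let λ : Γ → ℤ be a dominant integral weight, i.e., λ(b) ≥ 0 for all b ∈ Γ. Then there is no infinite sequence a_1, a_2, a_3, … of colors such that, setting λ_0 = λ and λ_j = s_{a_j}(λ_{j−1}) where (s_b(μ))(c) = μ(c) − μ(b)·θ_{bc}, one has λ_{j−1}(a_j) = 1 for every j ≥ 1. (Equivalently, there is no infinite sequence of colors for which every initial product s_{a_k} ⋯ s_{a_1} is a λ-minuscule Weyl group element.) -/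
namespace GCP

variable {Γ : Type*} [Fintype Γ] {P : Type*} [PartialOrder P] [LocallyFiniteOrder P]

/-- The sequence of weights `λ_0 = λ`, `λ_{n+1} = s_{a_n}(λ_n)`, where weights
are recorded by their integer values on the simple coroots and the simple
reflection acts by `(s_b μ)(c) = μ(c) − μ(b)·θ b c`. -/
def weightSeq (D : DynkinDiagram Γ) (lam : Γ → ℤ) (a : ℕ → Γ) : ℕ → Γ → ℤ
  | 0 => lam
  | n + 1 => fun c => weightSeq D lam a n c - weightSeq D lam a n (a n) * D.θ (a n) c

/-!
Let `S` be the set of colors fired infinitely often. On `S` the weights stay in `{-1, 0, 1}`, so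
there is a window `[n₁, n₂)`, late enough that only colors of `S` fire, in which every color of
`S` fires and at whose ends the weights agree on `S`. The firing counts `w` of the window then
satisfy `∑ b, w b * θ b c = 0` for `c ∈ S`. Such a positive null vector yields a nonempty
`T ⊆ S`, not reached by `θ` from the rest of `S`, on which `θ` is symmetrizable: either `S`
itself is (peel off leaves), or `S` contains a subgraph of minimum degree two, and the null
vector forces that subgraph to be a union of components of `S` with all its edges simple.
With a symmetrizer `d`, invariance of the bilinear form under the reflections gives
`∑ d (a j) * λ_{n₁} (a j) = 0` over the firings `j` of colors of `T` in the window, while the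
same functional is positive at the first firing of a color of `T` and never decreases.
-/

open Finset Filter

theorem DynkinDiagram.θ_eq_zero_of_not_adj {D : DynkinDiagram Γ} {b c : Γ} (hbc : b ≠ c)
    (h : ¬ D.Adj b c) : D.θ b c = 0 :=
  le_antisymm (D.offdiag_nonpos b c hbc) (not_lt.1 fun hlt => h ⟨hbc, hlt⟩)

theorem DynkinDiagram.sum_θ_le_two_add_add {D : DynkinDiagram Γ} [DecidableEq Γ] {T : Finset Γ}
    {b c₁ c₂ : Γ} (hb : b ∈ T) (h₁ : c₁ ∈ T) (h₂ : c₂ ∈ T) (hb₁ : b ≠ c₁) (hb₂ : b ≠ c₂)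
    (h₁₂ : c₁ ≠ c₂) : ∑ c ∈ T, D.θ b c ≤ 2 + D.θ b c₁ + D.θ b c₂ := by
  calc ∑ c ∈ T, D.θ b c ≤ ∑ c ∈ {b, c₁, c₂}, D.θ b c :=
        sum_le_sum_of_subset_of_nonpos' (by simp [insert_subset_iff, *])
          fun c _ hc => D.offdiag_nonpos b c (by rintro rfl; simp at hc)
    _ = 2 + D.θ b c₁ + D.θ b c₂ := by
        rw [sum_insert (by simp [*]), sum_pair h₁₂, D.diag, add_assoc]

def IsSymmetrizer (D : DynkinDiagram Γ) (T : Finset Γ) (d : Γ → ℚ) : Prop :=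
  (∀ b ∈ T, 0 < d b) ∧ ∀ b ∈ T, ∀ c ∈ T, (D.θ b c : ℚ) * d c = D.θ c b * d b

theorem IsSymmetrizer.sum_mul_θ {ι : Type*} {D : DynkinDiagram Γ} {T : Finset Γ} {d : Γ → ℚ}
    (hd : IsSymmetrizer D T d) {s : Finset ι} {g : ι → Γ} (hg : ∀ i ∈ s, g i ∈ T) {b : Γ}
    (hb : b ∈ T) : ∑ i ∈ s, d (g i) * D.θ b (g i) = (∑ i ∈ s, D.θ (g i) b : ℤ) * d b := by
  push_cast
  rw [sum_mul]
  exact sum_congr rfl fun i hi => by rw [mul_comm, hd.2 b hb _ (hg i hi)]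

/-- Every color of `T` has at least two neighbors in `T`. -/
def MinDegreeTwo (D : DynkinDiagram Γ) (T : Finset Γ) : Prop :=
  ∀ b ∈ T, ∀ c, ∃ c' ∈ T, c' ≠ c ∧ D.Adj b c'

section Symmetrizer

variable [DecidableEq Γ] {D : DynkinDiagram Γ}

theorem IsSymmetrizer.extend {T : Finset Γ} {ℓ p : Γ} {d : Γ → ℚ}
    (hd : IsSymmetrizer D (T.erase ℓ) d) (hp : ∀ c ∈ T, D.Adj ℓ c → c = p) :
    ∃ d', IsSymmetrizer D T d' := by
  obtain ⟨x, hx0, hx⟩ : ∃ x : ℚ, 0 < x ∧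
      ∀ c ∈ T, D.Adj ℓ c → (D.θ ℓ c : ℚ) * d c = D.θ c ℓ * x := by
    by_cases hpT : p ∈ T ∧ D.Adj ℓ p
    · obtain ⟨hpT, hadj⟩ := hpT
      have h₁ : (D.θ ℓ p : ℚ) < 0 := by exact_mod_cast hadj.2
      have h₂ : (D.θ p ℓ : ℚ) < 0 := by exact_mod_cast hadj.symm.2
      have hdp : 0 < d p := hd.1 p (mem_erase.2 ⟨hadj.1.symm, hpT⟩)
      refine ⟨D.θ ℓ p * d p / D.θ p ℓ,
        div_pos_of_neg_of_neg (mul_neg_of_neg_of_pos h₁ hdp) h₂, fun c hc hadj' => ?_⟩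
      obtain rfl := hp c hc hadj'
      rw [mul_div_cancel₀ _ h₂.ne]
    · exact ⟨1, one_pos, fun c hc hadj => (hpT ⟨hp c hc hadj ▸ hc, hp c hc hadj ▸ hadj⟩).elim⟩
  have hℓ : ∀ c ∈ T, c ≠ ℓ → (D.θ ℓ c : ℚ) * d c = D.θ c ℓ * x := fun c hc hcℓ => by
    by_cases hadj : D.Adj ℓ c
    · exact hx c hc hadj
    · have h₀ := D.θ_eq_zero_of_not_adj hcℓ.symm hadj
      rw [h₀, (D.zero_iff ℓ c hcℓ.symm).1 h₀]; simp
  refine ⟨Function.update d ℓ x, fun b hb => ?_, fun b hb c hc => ?_⟩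
  · rcases eq_or_ne b ℓ with rfl | hbℓ
    · simpa using hx0
    · simpa [hbℓ] using hd.1 b (mem_erase.2 ⟨hbℓ, hb⟩)
  · rcases eq_or_ne b ℓ with rfl | hbℓ <;> rcases eq_or_ne c b with rfl | hcb
    · rfl
    · simpa [hcb] using hℓ c hc hcb
    · rfl
    · rcases eq_or_ne c ℓ with rfl | hcℓ
      · simpa [hbℓ] using (hℓ b hb hbℓ).symm
      · simpa [hbℓ, hcℓ] using hd.2 b (mem_erase.2 ⟨hbℓ, hb⟩) c (mem_erase.2 ⟨hcℓ, hc⟩)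

theorem exists_isSymmetrizer_or_minDegreeTwo (T : Finset Γ) :
    (∃ d, IsSymmetrizer D T d) ∨ ∃ T₀ ⊆ T, T₀.Nonempty ∧ MinDegreeTwo D T₀ := by
  induction T using Finset.strongInduction with
  | H T ih =>
  by_cases hcore : MinDegreeTwo D T
  · rcases T.eq_empty_or_nonempty with rfl | hne
    · exact .inl ⟨1, by simp [IsSymmetrizer]⟩
    · exact .inr ⟨T, subset_rfl, hne, hcore⟩
  · obtain ⟨ℓ, hℓ, p, hp⟩ : ∃ ℓ ∈ T, ∃ p, ∀ c ∈ T, D.Adj ℓ c → c = p := by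
      simpa [MinDegreeTwo, not_imp_not] using hcore
    rcases ih (T.erase ℓ) (erase_ssubset hℓ) with ⟨d, hd⟩ | ⟨T₀, hT₀, hne, hcore⟩
    · exact .inl (hd.extend hp)
    · exact .inr ⟨T₀, hT₀.trans (erase_subset ℓ T), hne, hcore⟩

namespace MinDegreeTwo

variable {S T₀ : Finset Γ} {w : Γ → ℤ}

theorem sum_θ_nonpos (hT₀ : MinDegreeTwo D T₀) (b : Γ) : ∑ c ∈ T₀, D.θ b c ≤ 0 := by
  by_cases hb : b ∈ T₀
  · obtain ⟨c₁, h₁, -, hadj₁⟩ := hT₀ b hb b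
    obtain ⟨c₂, h₂, h₂₁, hadj₂⟩ := hT₀ b hb c₁
    have := D.sum_θ_le_two_add_add hb h₁ h₂ hadj₁.1 hadj₂.1 h₂₁.symm
    have := hadj₁.2
    have := hadj₂.2
    omega
  · exact sum_nonpos fun c hc => D.offdiag_nonpos b c (ne_of_mem_of_not_mem hc hb).symm

theorem sum_θ_eq_zero (hT₀ : MinDegreeTwo D T₀) (hsub : T₀ ⊆ S) (hw : ∀ b ∈ S, 0 < w b)
    (hnull : ∀ c ∈ S, ∑ b ∈ S, w b * D.θ b c = 0) {b : Γ} (hb : b ∈ S) :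
    ∑ c ∈ T₀, D.θ b c = 0 := by
  have hzero : ∑ b ∈ S, w b * ∑ c ∈ T₀, D.θ b c = 0 := by
    simp_rw [mul_sum]
    rw [sum_comm]
    exact sum_eq_zero fun c hc => hnull c (hsub hc)
  have := (sum_eq_zero_iff_of_nonpos fun b hb =>
    mul_nonpos_of_nonneg_of_nonpos (hw b hb).le (hT₀.sum_θ_nonpos b)).1 hzero b hb
  exact (mul_eq_zero.1 this).resolve_left (hw b hb).ne'

theorem θ_eq_zero_of_notMem (hT₀ : MinDegreeTwo D T₀) (hsub : T₀ ⊆ S) (hw : ∀ b ∈ S, 0 < w b)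
    (hnull : ∀ c ∈ S, ∑ b ∈ S, w b * D.θ b c = 0) {b c : Γ} (hb : b ∈ S) (hbT : b ∉ T₀)
    (hc : c ∈ T₀) : D.θ b c = 0 :=
  (sum_eq_zero_iff_of_nonpos fun c hc => D.offdiag_nonpos b c (ne_of_mem_of_not_mem hc hbT).symm).1
    (hT₀.sum_θ_eq_zero hsub hw hnull hb) c hc

theorem isSymmetrizer_one (hT₀ : MinDegreeTwo D T₀) (hsub : T₀ ⊆ S) (hw : ∀ b ∈ S, 0 < w b)
    (hnull : ∀ c ∈ S, ∑ b ∈ S, w b * D.θ b c = 0) : IsSymmetrizer D T₀ 1 := by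
  have hunit : ∀ b ∈ T₀, ∀ c ∈ T₀, D.Adj b c → D.θ b c = -1 := fun b hb c hc hadj => by
    obtain ⟨c', hc', hc'c, hadj'⟩ := hT₀ b hb c
    have := D.sum_θ_le_two_add_add hb hc hc' hadj.1 hadj'.1 hc'c.symm
    have := hT₀.sum_θ_eq_zero hsub hw hnull (hsub hb)
    have := hadj.2
    have := hadj'.2
    omega
  refine ⟨fun _ _ => one_pos, fun b hb c hc => ?_⟩
  simp only [Pi.one_apply, mul_one, Int.cast_inj]
  rcases eq_or_ne b c with rfl | hbc
  · rfl
  by_cases hadj : D.Adj b c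
  · rw [hunit b hb c hc hadj, hunit c hc b hb hadj.symm]
  · have h₀ := D.θ_eq_zero_of_not_adj hbc hadj
    rw [h₀, (D.zero_iff b c hbc).1 h₀]

end MinDegreeTwo

theorem exists_closed_isSymmetrizer {S : Finset Γ} (hS : S.Nonempty) {w : Γ → ℤ}
    (hw : ∀ b ∈ S, 0 < w b) (hnull : ∀ c ∈ S, ∑ b ∈ S, w b * D.θ b c = 0) :
    ∃ T ⊆ S, T.Nonempty ∧ (∀ b ∈ S, b ∉ T → ∀ c ∈ T, D.θ b c = 0) ∧
      ∃ d, IsSymmetrizer D T d := by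
  rcases exists_isSymmetrizer_or_minDegreeTwo (D := D) S with hd | ⟨T₀, hsub, hne, hT₀⟩
  · exact ⟨S, subset_rfl, hS, fun b hb hbS => (hbS hb).elim, hd⟩
  · exact ⟨T₀, hsub, hne, fun b hb hbT c hc => hT₀.θ_eq_zero_of_notMem hsub hw hnull hb hbT hc,
      1, hT₀.isSymmetrizer_one hsub hw hnull⟩

end Symmetrizer

def IsMinusculeSeq (D : DynkinDiagram Γ) (lam : Γ → ℤ) (a : ℕ → Γ) : Prop :=
  ∀ j, weightSeq D lam a j (a j) = 1

namespace IsMinusculeSeq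

variable {D : DynkinDiagram Γ} {lam : Γ → ℤ} {a : ℕ → Γ}

theorem weightSeq_succ (h : IsMinusculeSeq D lam a) (n : ℕ) (c : Γ) :
    weightSeq D lam a (n + 1) c = weightSeq D lam a n c - D.θ (a n) c := by
  simp only [weightSeq, h n, one_mul]

theorem sum_mul_weightSeq_succ {ι : Type*} {d : Γ → ℚ} (h : IsMinusculeSeq D lam a)
    (s : Finset ι) (g : ι → Γ) (n : ℕ) :
    ∑ i ∈ s, d (g i) * (weightSeq D lam a (n + 1) (g i) : ℚ) =
      ∑ i ∈ s, d (g i) * (weightSeq D lam a n (g i) : ℚ) - ∑ i ∈ s, d (g i) * D.θ (a n) (g i) := by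
  rw [← sum_sub_distrib]
  exact sum_congr rfl fun i _ => by rw [h.weightSeq_succ]; push_cast; ring

theorem weightSeq_eq_sub_sum (h : IsMinusculeSeq D lam a) {m n : ℕ} (hmn : m ≤ n) (c : Γ) :
    weightSeq D lam a n c = weightSeq D lam a m c - ∑ j ∈ Ico m n, D.θ (a j) c := by
  induction n, hmn using Nat.le_induction with
  | base => simp
  | succ n hmn ih => rw [h.weightSeq_succ, ih, sum_Ico_succ_top hmn]; ring

theorem weightSeq_le_of_forall_ne (h : IsMinusculeSeq D lam a) {m n : ℕ} {c : Γ} (hmn : m ≤ n)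
    (hc : ∀ j ∈ Ico m n, a j ≠ c) : weightSeq D lam a m c ≤ weightSeq D lam a n c := by
  rw [h.weightSeq_eq_sub_sum hmn, le_sub_self_iff]
  exact sum_nonpos fun j hj => D.offdiag_nonpos _ _ (hc j hj)

theorem neg_one_le_weightSeq (h : IsMinusculeSeq D lam a) (hdom : ∀ b, 0 ≤ lam b) (n : ℕ)
    (c : Γ) : -1 ≤ weightSeq D lam a n c := by
  induction n with
  | zero => exact (neg_one_lt_zero.trans_le (hdom c)).le
  | succ n ih =>
    rcases eq_or_ne (a n) c with rfl | hne
    · rw [h.weightSeq_succ, h n, D.diag]; norm_num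
    · exact ih.trans (h.weightSeq_le_of_forall_ne n.le_succ (by simpa using hne))

theorem weightSeq_nonneg (h : IsMinusculeSeq D lam a) (hdom : ∀ b, 0 ≤ lam b) {n : ℕ} {c : Γ}
    (hc : ∀ j < n, a j ≠ c) : 0 ≤ weightSeq D lam a n c :=
  (hdom c).trans (h.weightSeq_le_of_forall_ne n.zero_le fun j hj => hc j (mem_Ico.1 hj).2)

theorem weightSeq_le_one (h : IsMinusculeSeq D lam a) {c : Γ} (hc : ∃ᶠ m in atTop, a m = c)
    (n : ℕ) : weightSeq D lam a n c ≤ 1 := by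
  classical
  have hex : ∃ m, n ≤ m ∧ a m = c := frequently_atTop.1 hc n
  obtain ⟨hnm, hm⟩ := Nat.find_spec hex
  calc weightSeq D lam a n c ≤ weightSeq D lam a (Nat.find hex) c :=
        h.weightSeq_le_of_forall_ne hnm fun j hj hjc =>
          Nat.find_min hex (mem_Ico.1 hj).2 ⟨(mem_Ico.1 hj).1, hjc⟩
    _ = 1 := by simpa only [hm] using h (Nat.find hex)

theorem exists_periodic_window (h : IsMinusculeSeq D lam a) (hdom : ∀ b, 0 ≤ lam b) :
    ∃ (S : Finset Γ) (n₁ n₂ : ℕ), S.Nonempty ∧ n₁ ≤ n₂ ∧ (∀ j ∈ Ico n₁ n₂, a j ∈ S) ∧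
      (∀ c ∈ S, ∃ j ∈ Ico n₁ n₂, a j = c) ∧
      ∀ c ∈ S, weightSeq D lam a n₂ c = weightSeq D lam a n₁ c := by
  classical
  set S : Finset Γ := univ.filter fun c => ∃ᶠ n in atTop, a n = c
  have hS : ∀ c ∈ S, ∃ᶠ n in atTop, a n = c := fun c hc => (mem_filter.1 hc).2
  have hev : ∀ᶠ n in atTop, ∀ c, a n = c → c ∈ S := eventually_all.2 fun c => by
    by_cases hc : ∃ᶠ n in atTop, a n = c
    · exact .of_forall fun _ _ => mem_filter.2 ⟨mem_univ c, hc⟩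
    · exact (not_frequently.1 hc).mono fun _ hn e => (hn e).elim
  obtain ⟨N₀, hN₀⟩ := eventually_atTop.1 hev
  -- on `S` the weights stay in `[-1, 1]`, so some state recurs infinitely often
  let state : ℕ → S → Set.Icc (-1 : ℤ) 1 := fun n c =>
    ⟨weightSeq D lam a n c, h.neg_one_le_weightSeq hdom n c, h.weightSeq_le_one (hS c c.2) n⟩
  obtain ⟨s, hs⟩ := Finite.exists_infinite_fiber state
  have hs : ∃ᶠ n in atTop, state n = s :=
    Nat.frequently_atTop_iff_infinite.2 (Set.infinite_coe_iff.1 hs)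
  obtain ⟨n₁, hn₁s, hn₁⟩ := (hs.and_eventually (eventually_ge_atTop N₀)).exists
  have hfire : ∀ᶠ n₂ in atTop, n₁ ≤ n₂ ∧ ∀ c ∈ S, ∃ j ∈ Ico n₁ n₂, a j = c :=
    (eventually_ge_atTop n₁).and <| (eventually_all_finset S).2 fun c hc => by
      obtain ⟨j, hj, hjc⟩ := frequently_atTop.1 (hS c hc) n₁
      exact (eventually_gt_atTop j).mono fun n₂ hn₂ => ⟨j, mem_Ico.2 ⟨hj, hn₂⟩, hjc⟩
  obtain ⟨n₂, hn₂s, hn₁₂, hn₂⟩ := (hs.and_eventually hfire).exists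
  refine ⟨S, n₁, n₂, ⟨a n₁, hN₀ n₁ hn₁ _ rfl⟩, hn₁₂,
    fun j hj => hN₀ j (hn₁.trans (mem_Ico.1 hj).1) _ rfl, hn₂, fun c hc => ?_⟩
  exact congrArg (fun f => (f ⟨c, hc⟩ : ℤ)) (hn₂s.trans hn₁s.symm)

theorem sum_card_fiber_mul_θ [DecidableEq Γ] (h : IsMinusculeSeq D lam a) {S : Finset Γ}
    {n₁ n₂ : ℕ} (hn : n₁ ≤ n₂) (hmaps : ∀ j ∈ Ico n₁ n₂, a j ∈ S) (c : Γ) :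
    ∑ b ∈ S, (#{j ∈ Ico n₁ n₂ | a j = b} : ℤ) * D.θ b c =
      weightSeq D lam a n₁ c - weightSeq D lam a n₂ c := by
  rw [h.weightSeq_eq_sub_sum hn, sub_sub_cancel, ← sum_fiberwise_of_maps_to hmaps]
  refine sum_congr rfl fun b _ => ?_
  rw [sum_congr rfl fun j hj => by rw [(mem_filter.1 hj).2], sum_const, nsmul_eq_mul]

end IsMinusculeSeq

namespace IsMinusculeSeq

variable [DecidableEq Γ] {D : DynkinDiagram Γ} {lam : Γ → ℤ} {a : ℕ → Γ} {T : Finset Γ}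
  {d : Γ → ℚ} {n₁ n₂ : ℕ}

theorem sum_θ_filter_eq (h : IsMinusculeSeq D lam a)
    (hclosed : ∀ j ∈ Ico n₁ n₂, a j ∉ T → ∀ c ∈ T, D.θ (a j) c = 0) {n : ℕ} (h₁ : n₁ ≤ n)
    (h₂ : n ≤ n₂) {b : Γ} (hb : b ∈ T) :
    ∑ j ∈ Ico n₁ n with a j ∈ T, D.θ (a j) b = weightSeq D lam a n₁ b - weightSeq D lam a n b := by
  rw [sum_filter_of_ne, h.weightSeq_eq_sub_sum h₁, sub_sub_cancel]
  exact fun j hj hne => by_contra fun hjT => hne (hclosed j (Ico_subset_Ico_right h₂ hj) hjT b hb)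

/-- The invariance of the symmetrized bilinear form under the reflections, summed over the
firings in `[n₁, n)` of colors of `T`. -/
theorem sum_mul_weightSeq_add_eq_zero (h : IsMinusculeSeq D lam a) (hd : IsSymmetrizer D T d)
    (hclosed : ∀ j ∈ Ico n₁ n₂, a j ∉ T → ∀ c ∈ T, D.θ (a j) c = 0) {n : ℕ} (h₁ : n₁ ≤ n)
    (h₂ : n ≤ n₂) :
    ∑ j ∈ Ico n₁ n with a j ∈ T, d (a j) * (weightSeq D lam a n (a j) : ℚ) +
      ∑ j ∈ Ico n₁ n with a j ∈ T, d (a j) * (weightSeq D lam a n₁ (a j) : ℚ) = 0 := by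
  induction n, h₁ using Nat.le_induction with
  | base => simp
  | succ n hn ih =>
    have hn₂ : n ∈ Ico n₁ n₂ := mem_Ico.2 ⟨hn, h₂⟩
    specialize ih (by omega)
    rw [Nat.Ico_succ_right_eq_insert_Ico hn, filter_insert]
    by_cases hnT : a n ∈ T
    · have hθ := hd.sum_mul_θ (s := {j ∈ Ico n₁ n | a j ∈ T})
        (fun j hj => (mem_filter.1 hj).2) hnT
      rw [h.sum_θ_filter_eq hclosed hn (by omega) hnT, h n] at hθ
      push_cast at hθ
      rw [if_pos hnT, sum_insert (by simp), sum_insert (by simp), h.sum_mul_weightSeq_succ, hθ,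
        h.weightSeq_succ, h n, D.diag]
      push_cast
      linarith
    · have hθ : ∑ j ∈ Ico n₁ n with a j ∈ T, d (a j) * (D.θ (a n) (a j) : ℚ) = 0 :=
        sum_eq_zero fun j hj => by rw [hclosed n hn₂ hnT _ (mem_filter.1 hj).2]; simp
      rwa [if_neg hnT, h.sum_mul_weightSeq_succ, hθ, sub_zero]

theorem monotone_sum_mul_weightSeq (h : IsMinusculeSeq D lam a) (hd : IsSymmetrizer D T d)
    (hclosed : ∀ j ∈ Ico n₁ n₂, a j ∉ T → ∀ c ∈ T, D.θ (a j) c = 0) (hn : n₁ ≤ n₂)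
    (hperiod : ∀ c ∈ T, weightSeq D lam a n₂ c = weightSeq D lam a n₁ c) :
    Monotone fun n => ∑ j ∈ Ico n₁ n₂ with a j ∈ T, d (a j) * (weightSeq D lam a n (a j) : ℚ) := by
  refine monotone_nat_of_le_succ fun n => ?_
  rw [h.sum_mul_weightSeq_succ, le_sub_self_iff]
  by_cases hnT : a n ∈ T
  · rw [hd.sum_mul_θ (fun j hj => (mem_filter.1 hj).2) hnT,
      h.sum_θ_filter_eq hclosed hn le_rfl hnT, hperiod _ hnT]
    simp
  · refine sum_nonpos fun j hj => mul_nonpos_of_nonneg_of_nonpos (hd.1 _ (mem_filter.1 hj).2).le ?_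
    exact_mod_cast D.offdiag_nonpos _ _ (ne_of_mem_of_not_mem (mem_filter.1 hj).2 hnT).symm

theorem false_of_periodic_window (h : IsMinusculeSeq D lam a) (hdom : ∀ b, 0 ≤ lam b)
    (hT : T.Nonempty) (hd : IsSymmetrizer D T d)
    (hclosed : ∀ j ∈ Ico n₁ n₂, a j ∉ T → ∀ c ∈ T, D.θ (a j) c = 0)
    (hfire : ∀ c ∈ T, ∃ j ∈ Ico n₁ n₂, a j = c)
    (hperiod : ∀ c ∈ T, weightSeq D lam a n₂ c = weightSeq D lam a n₁ c) : False := by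
  obtain ⟨c₀, hc₀⟩ := hT
  obtain ⟨j₀, hj₀, rfl⟩ := hfire c₀ hc₀
  have hn : n₁ ≤ n₂ := by have := mem_Ico.1 hj₀; omega
  set Φ := fun n => ∑ j ∈ Ico n₁ n₂ with a j ∈ T, d (a j) * (weightSeq D lam a n (a j) : ℚ)
  have hΦ₂ : Φ n₂ = Φ n₁ := sum_congr rfl fun j hj => by rw [hperiod _ (mem_filter.1 hj).2]
  have hΦ₁ : Φ n₁ = 0 := by
    have := h.sum_mul_weightSeq_add_eq_zero hd hclosed hn le_rfl
    change Φ n₂ + Φ n₁ = 0 at this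
    linarith
  -- at the first firing `t` of a color of `T`, the weights on `T` are still dominant
  have hex : ∃ t, a t ∈ T := ⟨j₀, hc₀⟩
  set t := Nat.find hex
  have hΦt : 0 < Φ t := by
    obtain ⟨j, hj, hjt⟩ := hfire (a t) (Nat.find_spec hex)
    refine sum_pos' (fun i hi => mul_nonneg (hd.1 _ (mem_filter.1 hi).2).le ?_)
      ⟨j, mem_filter.2 ⟨hj, hjt ▸ Nat.find_spec hex⟩, ?_⟩
    · exact_mod_cast h.weightSeq_nonneg hdom fun k hk e =>
        Nat.find_min hex hk (e ▸ (mem_filter.1 hi).2)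
    · rw [hjt, h t, Int.cast_one, mul_one]
      exact hd.1 _ (Nat.find_spec hex)
  have ht : t ≤ n₂ := (Nat.find_min' hex hc₀).trans (mem_Ico.1 hj₀).2.le
  have := h.monotone_sum_mul_weightSeq hd hclosed hn hperiod ht
  change Φ t ≤ Φ n₂ at this
  linarith

end IsMinusculeSeq

/-- for a dominant integral weight `λ` there is no infinite
sequence of colors every initial segment of which is `λ`-minuscule, i.e. no
infinite sequence `a` with `λ_{j}(a_{j}) = 1` for all `j`. -/
theorem statement19 (D : DynkinDiagram Γ) (lam : Γ → ℤ) (hdom : ∀ b : Γ, 0 ≤ lam b) :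
    ¬ ∃ a : ℕ → Γ, ∀ j : ℕ, weightSeq D lam a j (a j) = 1 := by
  classical
  rintro ⟨a, h : IsMinusculeSeq D lam a⟩
  obtain ⟨S, n₁, n₂, hS, hn, hmaps, hfire, hperiod⟩ := h.exists_periodic_window hdom
  have hw : ∀ b ∈ S, 0 < (#{j ∈ Ico n₁ n₂ | a j = b} : ℤ) := fun b hb => by
    obtain ⟨j, hj, hjb⟩ := hfire b hb
    exact_mod_cast card_pos.2 ⟨j, mem_filter.2 ⟨hj, hjb⟩⟩
  have hnull : ∀ c ∈ S, ∑ b ∈ S, (#{j ∈ Ico n₁ n₂ | a j = b} : ℤ) * D.θ b c = 0 :=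
    fun c hc => by rw [h.sum_card_fiber_mul_θ hn hmaps, hperiod c hc, sub_self]
  obtain ⟨T, hTS, hT, hclosed, d, hd⟩ := exists_closed_isSymmetrizer hS hw hnull
  exact h.false_of_periodic_window hdom hT hd (fun j hj hjT => hclosed _ (hmaps j hj) hjT)
    (fun c hc => hfire c (hTS hc)) (fun c hc => hperiod c (hTS hc))

end GCP
end
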